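/- arXiv:2109.10015 — 6 statements merged into one kernel-verified Lean document; each statement's English description precedes it below -/
import Mathlib

section
/- For a prime power q ≥ 2 and positive integers n, n', the product ∏_{i=1}^{n'} (1 - q^{-i})/(1 - q^{-n-i}) is strictly greater than 1 - 3/(2q). -/
/-!
Put `x = q⁻¹ ≤ 1/2`. Each factor is at least `1 - x ^ i`, since its denominator lies in `(0, 1]`.
Multiplying the factors `1 - x ^ i` in one at a time shows
`∏_{i=1}^m (1 - x ^ i) ≥ 1 - x - x² + x ^ (m+1)`, the induction step having slack `y (x² - y) ≥ 0` for `y = x ^ (m+1)`.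
Finally `1 - x - x² ≥ 1 - 3x/2` because `x ≤ 1/2`.
-/

open Finset

lemma one_sub_sub_sq_add_pow_le_prod_one_sub_pow {x : ℝ} (hx₀ : 0 ≤ x) (hx₁ : x ≤ 1)
    {m : ℕ} (hm : 1 ≤ m) :
    1 - x - x ^ 2 + x ^ (m + 1) ≤ ∏ i ∈ Icc 1 m, (1 - x ^ i) := by
  induction m, hm using Nat.le_induction with
  | base => simp
  | succ m hm ih =>
    rw [prod_Icc_succ_top (by omega)]
    have hpow : x ^ (m + 1) ≤ x ^ 2 := pow_le_pow_of_le_one hx₀ hx₁ (by omega)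
    have hpos : 0 ≤ x ^ (m + 1) := pow_nonneg hx₀ _
    calc 1 - x - x ^ 2 + x ^ (m + 1 + 1)
        ≤ (1 - x - x ^ 2 + x ^ (m + 1)) * (1 - x ^ (m + 1)) := by
          rw [pow_succ x (m + 1)]; nlinarith [mul_nonneg hpos (sub_nonneg.2 hpow)]
      _ ≤ (∏ i ∈ Icc 1 m, (1 - x ^ i)) * (1 - x ^ (m + 1)) := by
          gcongr; exact sub_nonneg.2 (pow_le_one₀ hx₀ hx₁)

lemma one_sub_sub_sq_lt_prod_one_sub_pow {x : ℝ} (hx₀ : 0 < x) (hx₁ : x ≤ 1) (m : ℕ) :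
    1 - x - x ^ 2 < ∏ i ∈ Icc 1 m, (1 - x ^ i) := by
  rcases Nat.eq_zero_or_pos m with rfl | hm
  · rw [Icc_eq_empty (by omega), prod_empty]
    nlinarith
  · calc 1 - x - x ^ 2 < 1 - x - x ^ 2 + x ^ (m + 1) := by linarith [pow_pos hx₀ (m + 1)]
      _ ≤ _ := one_sub_sub_sq_add_pow_le_prod_one_sub_pow hx₀.le hx₁ hm

theorem stmt_1_general (q : ℝ) (hq : 2 ≤ q) (n n' : ℕ) :
    1 - 3 / (2 * q) <
      ∏ i ∈ Finset.Icc 1 n',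
        (1 - q ^ (-(i : ℤ))) / (1 - q ^ (-((n : ℤ) + (i : ℤ)))) := by
  set x := q⁻¹ with hx
  have hx₀ : 0 < x := by positivity
  have hx_half : x ≤ 1 / 2 := by rw [hx, one_div]; exact inv_anti₀ (by norm_num) hq
  have hzpow (k : ℕ) : q ^ (-(k : ℤ)) = x ^ k := by rw [zpow_neg, zpow_natCast, inv_pow]
  have hfactor (i : ℕ) (hi : 1 ≤ i) :
      1 - x ^ i ≤ (1 - q ^ (-(i : ℤ))) / (1 - q ^ (-((n : ℤ) + (i : ℤ)))) := by
    rw [← Nat.cast_add, hzpow, hzpow]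
    exact le_div_self (sub_nonneg.2 (pow_le_one₀ hx₀.le (by linarith)))
      (sub_pos.2 (pow_lt_one₀ hx₀.le (by linarith) (by omega)))
      (sub_le_self _ (by positivity))
  calc 1 - 3 / (2 * q) ≤ 1 - x - x ^ 2 := by
        rw [show 3 / (2 * q) = 3 / 2 * x by rw [hx]; ring]; nlinarith
    _ < ∏ i ∈ Icc 1 n', (1 - x ^ i) := one_sub_sub_sq_lt_prod_one_sub_pow hx₀ (by linarith) n'
    _ ≤ _ := prod_le_prod (fun i _ => sub_nonneg.2 (pow_le_one₀ hx₀.le (by linarith)))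
        fun i hi => hfactor i (mem_Icc.1 hi).1

/-- For q ≥ 2 and positive integers n, n', the product
∏_{i=1}^{n'} (1 - q^{-i})/(1 - q^{-n-i}) is strictly greater than 1 - 3/(2q). -/
theorem stmt_1 (q : ℝ) (hq : 2 ≤ q) (n n' : ℕ) (hn : 0 < n) (hn' : 0 < n') :
    1 - 3 / (2 * q) <
      ∏ i ∈ Finset.Icc 1 n',
        (1 - q ^ (-(i : ℤ))) / (1 - q ^ (-((n : ℤ) + (i : ℤ)))) :=
  stmt_1_general q hq n n'
end

section
/- For any real q ≥ 2, ∏_{i=1}^{∞} (1 - q^{-i}) > 1 - q^{-1} - q^{-2}. -/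
/-!
Put `a = q⁻¹ ∈ (0, 1)`. Keep the first two factors `(1 - a)(1 - a²)` and bound the tail by the
Weierstrass product inequality `∏ (1 - xᵢ) ≥ 1 - ∑ xᵢ`: it is at least
`1 - ∑_{i ≥ 3} aⁱ = 1 - a³/(1 - a)`. Then `(1 - a)(1 - a²)(1 - a³/(1 - a)) = 1 - a - a² + a⁵`.
-/

open Finset Filter

theorem Finset.one_sub_sum_le_prod_one_sub {ι R : Type*} [CommRing R] [LinearOrder R]
    [IsStrictOrderedRing R] (s : Finset ι) {f : ι → R} (hf0 : ∀ i ∈ s, 0 ≤ f i)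
    (hf1 : ∀ i ∈ s, f i ≤ 1) :
    1 - ∑ i ∈ s, f i ≤ ∏ i ∈ s, (1 - f i) := by
  classical
  induction s using Finset.induction_on with
  | empty => simp
  | insert j s hj ih =>
    rw [sum_insert hj, prod_insert hj]
    have hs := ih (fun i hi => hf0 i (mem_insert_of_mem hi))
      (fun i hi => hf1 i (mem_insert_of_mem hi))
    have hsum : 0 ≤ ∑ i ∈ s, f i := sum_nonneg fun i hi => hf0 i (mem_insert_of_mem hi)
    have hj0 := hf0 j (mem_insert_self j s)
    have hj1 := hf1 j (mem_insert_self j s)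
    nlinarith

theorem one_sub_pow_div_le_prod_range_one_sub_pow {K : Type*} [Field K] [LinearOrder K]
    [IsStrictOrderedRing K] {a : K} (ha0 : 0 ≤ a) (ha1 : a < 1) (k n : ℕ) :
    1 - a ^ k / (1 - a) ≤ ∏ i ∈ range n, (1 - a ^ (i + k)) := by
  have hgeom : ∑ i ∈ range n, a ^ (i + k) ≤ a ^ k / (1 - a) := by
    have := geom_sum_Ico_le_of_lt_one (m := 0 + k) (n := n + k) ha0 ha1
    rwa [← sum_Ico_add', ← range_eq_Ico, zero_add] at this
  calc 1 - a ^ k / (1 - a) ≤ 1 - ∑ i ∈ range n, a ^ (i + k) := by linarith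
    _ ≤ _ := one_sub_sum_le_prod_one_sub _ (fun i _ => pow_nonneg ha0 _)
      (fun i _ => pow_le_one₀ ha0 ha1.le)

theorem le_prod_range_add_two_one_sub_pow_succ {K : Type*} [Field K] [LinearOrder K]
    [IsStrictOrderedRing K] {a : K} (ha0 : 0 ≤ a) (ha1 : a < 1) (n : ℕ) :
    1 - a - a ^ 2 + a ^ 5 ≤ ∏ i ∈ range (n + 2), (1 - a ^ (i + 1)) := by
  have hsplit : ∏ i ∈ range (n + 2), (1 - a ^ (i + 1)) =
      (1 - a) * (1 - a ^ 2) * ∏ i ∈ range n, (1 - a ^ (i + 3)) := by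
    rw [add_comm n 2, prod_range_add]
    simp only [prod_range_succ, prod_range_zero]
    ring_nf
  have htail := one_sub_pow_div_le_prod_range_one_sub_pow ha0 ha1 3 n
  have hhead : 0 ≤ (1 - a) * (1 - a ^ 2) := by
    have : a ^ 2 < 1 := pow_lt_one₀ ha0 ha1 two_ne_zero
    nlinarith
  have hne : (1 - a) ≠ 0 := by linarith
  calc 1 - a - a ^ 2 + a ^ 5 = (1 - a) * (1 - a ^ 2) * (1 - a ^ 3 / (1 - a)) := by
        field_simp; ring
    _ ≤ _ := hsplit ▸ mul_le_mul_of_nonneg_left htail hhead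

theorem Real.multipliable_one_sub_pow_succ {a : ℝ} (ha : |a| < 1) :
    Multipliable fun n : ℕ => 1 - a ^ (n + 1) := by
  simpa [sub_eq_add_neg] using multipliable_one_add_of_summable (f := fun n : ℕ => -a ^ (n + 1))
    (by simpa using (summable_nat_add_iff 1).mpr (summable_geometric_of_lt_one (abs_nonneg a) ha))

theorem Real.le_tprod_one_sub_pow_succ {a : ℝ} (ha0 : 0 ≤ a) (ha1 : a < 1) :
    1 - a - a ^ 2 + a ^ 5 ≤ ∏' n : ℕ, (1 - a ^ (n + 1)) := by
  have hprod := (Real.multipliable_one_sub_pow_succ (by rwa [abs_of_nonneg ha0])).hasProd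
    |>.tendsto_prod_nat
  refine ge_of_tendsto ((tendsto_add_atTop_iff_nat 2).mpr hprod) (Eventually.of_forall fun n => ?_)
  exact le_prod_range_add_two_one_sub_pow_succ ha0 ha1 n

/-- For any real q ≥ 2, ∏_{i=1}^∞ (1 - q^{-i}) > 1 - q^{-1} - q^{-2}. -/
theorem stmt_2 (q : ℝ) (hq : 2 ≤ q) :
    1 - q ^ (-1 : ℤ) - q ^ (-2 : ℤ) < ∏' i : ℕ, (1 - q ^ (-((i : ℤ) + 1))) := by
  set a := q⁻¹
  have ha0 : 0 < a := by positivity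
  have ha1 : a < 1 := inv_lt_one_of_one_lt₀ (by linarith)
  have hpow (k : ℕ) : q ^ (-(k : ℤ)) = a ^ k := by simp [a, zpow_neg, inv_pow]
  calc 1 - q ^ (-1 : ℤ) - q ^ (-2 : ℤ) = 1 - a - a ^ 2 := by simp [← hpow, a]
    _ < 1 - a - a ^ 2 + a ^ 5 := by linarith [pow_pos ha0 5]
    _ ≤ ∏' n : ℕ, (1 - a ^ (n + 1)) := Real.le_tprod_one_sub_pow_succ ha0.le ha1
    _ = _ := by simp_rw [← hpow]; push_cast; rfl
end

section
/- Define ζ_n(q) = (1 - (-q)^{-n+1})(1 - (-q)^{-n}). For q ≥ 2 and integers 1 ≤ i < j, ζ_{2i+2}(q)·ζ_{2j}(q) < ζ_{2i}(q)·ζ_{2j+2}(q). -/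
/-!
Put `t = q⁻¹`. Since `(-q)^{-n} = t^n` for even `n` and `-t^n` for odd `n`, the even-indexed
factors are `ζ_{2k+2}(q) = (1 + x)(1 - x t)` with `x = t^{2k+1}`, and passing from `2k` to `2k + 2`
replaces `x` by `x t²`. For `x = a = t^{2i-1}` and `x = b = t^{2j-1}` the difference of the two
sides of the inequality factors as `(a - b)(1 - t²)((1 - t) - (a + b) t (1 + t²) - a b (1 - t) t³)`,
and the last factor is positive because `a ≤ t`, `b ≤ t³` and `t ≤ 1/2`.
-/

/-- `ζ_{2k+2}(q) = evenZeta q⁻¹ (q⁻¹ ^ (2k+1))`. -/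
def evenZeta (t x : ℝ) : ℝ := (1 + x) * (1 - x * t)

lemma one_sub_neg_zpow_mul_eq_evenZeta (q : ℝ) (k : ℕ) :
    (1 - (-q) ^ (-((2 * k + 2 : ℕ) : ℤ) + 1)) * (1 - (-q) ^ (-((2 * k + 2 : ℕ) : ℤ)))
      = evenZeta q⁻¹ (q⁻¹ ^ (2 * k + 1)) := by
  have hexp : -((2 * k + 2 : ℕ) : ℤ) + 1 = -((2 * k + 1 : ℕ) : ℤ) := by push_cast; ring
  rw [hexp, zpow_neg, zpow_neg, zpow_natCast, zpow_natCast, Odd.neg_pow ⟨k, rfl⟩,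
    Even.neg_pow ⟨k + 1, by ring⟩, inv_neg, ← inv_pow, ← inv_pow, pow_succ _ (2 * k + 1),
    evenZeta]
  ring

lemma evenZeta_mul_sub_evenZeta_mul (t a b : ℝ) :
    evenZeta t a * evenZeta t (b * t ^ 2) - evenZeta t (a * t ^ 2) * evenZeta t b
      = (a - b) * (1 - t ^ 2) * ((1 - t) - (a + b) * t * (1 + t ^ 2) - a * b * (1 - t) * t ^ 3) := by
  simp only [evenZeta]
  ring

lemma evenZeta_mul_lt_evenZeta_mul {t a b : ℝ} (ht₀ : 0 < t) (ht : t ≤ 1 / 2) (hb : 0 < b)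
    (hba : b < a) (hat : a ≤ t) (hbt : b ≤ t ^ 3) :
    evenZeta t (a * t ^ 2) * evenZeta t b < evenZeta t a * evenZeta t (b * t ^ 2) := by
  have hsum : (a + b) * t * (1 + t ^ 2) ≤ (t + t ^ 3) * t * (1 + t ^ 2) := by gcongr
  have hprod : a * b * (1 - t) * t ^ 3 ≤ t * t ^ 3 * 1 * t ^ 3 := by gcongr <;> linarith
  have hpoly : 0 < 1 - t - t ^ 2 - 2 * t ^ 4 - t ^ 6 - t ^ 7 := by
    nlinarith [pow_le_pow_left₀ ht₀.le ht 2, pow_le_pow_left₀ ht₀.le ht 4,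
      pow_le_pow_left₀ ht₀.le ht 6, pow_le_pow_left₀ ht₀.le ht 7]
  have hlast : 0 < (1 - t) - (a + b) * t * (1 + t ^ 2) - a * b * (1 - t) * t ^ 3 := by
    nlinarith
  have ht1 : 0 < 1 - t ^ 2 := by nlinarith
  rw [← sub_pos, evenZeta_mul_sub_evenZeta_mul]
  exact mul_pos (mul_pos (sub_pos.mpr hba) ht1) hlast

/-- With ζ_n(q) = (1 - (-q)^{-n+1})(1 - (-q)^{-n}), q ≥ 2 and 1 ≤ i < j,
ζ_{2i+2} ζ_{2j} < ζ_{2i} ζ_{2j+2}. -/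
theorem stmt_6 (q : ℝ) (hq : 2 ≤ q) (ζ : ℕ → ℝ)
    (hζ : ∀ n : ℕ, ζ n = (1 - (-q) ^ (-(n : ℤ) + 1)) * (1 - (-q) ^ (-(n : ℤ))))
    (i j : ℕ) (hi : 1 ≤ i) (hij : i < j) :
    ζ (2 * i + 2) * ζ (2 * j) < ζ (2 * i) * ζ (2 * j + 2) := by
  have hζ_even (k : ℕ) : ζ (2 * (k + 1)) = evenZeta q⁻¹ (q⁻¹ ^ (2 * k + 1)) := by
    rw [hζ, mul_add, one_sub_neg_zpow_mul_eq_evenZeta]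
  have hζ_shift (k : ℕ) : ζ (2 * (k + 1) + 2) = evenZeta q⁻¹ (q⁻¹ ^ (2 * k + 1) * q⁻¹ ^ 2) := by
    rw [hζ, one_sub_neg_zpow_mul_eq_evenZeta, ← pow_add]
    ring_nf
  obtain ⟨i, rfl⟩ := Nat.exists_eq_add_of_le' hi
  obtain ⟨j, rfl⟩ := Nat.exists_eq_add_of_le' (hi.trans hij.le)
  have ht₀ : 0 < q⁻¹ := by positivity
  have ht : q⁻¹ ≤ 1 / 2 := by rw [one_div]; exact inv_anti₀ two_pos hq
  have ht1 : q⁻¹ < 1 := by linarith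
  rw [hζ_even, hζ_even, hζ_shift, hζ_shift]
  exact evenZeta_mul_lt_evenZeta_mul ht₀ ht (by positivity)
    (pow_lt_pow_right_of_lt_one₀ ht₀ ht1 (by omega)) (pow_le_of_le_one ht₀.le ht1.le (by omega))
    (pow_le_pow_of_le_one ht₀.le ht1.le (by omega))
end

section
/- Define ζ_n(q) = (1 - (-q)^{-n+1})(1 - (-q)^{-n}). For q ≥ 2 and all positive integers n, n', ζ_n(q)·ζ_{n'}(q)·ζ_4(q) ≤ ζ_2(q)²·ζ_{n+n'}(q). -/
/-!
In `s = 1/q ∈ (0, 1/2]` we have `ζ_1 = 0`, `ζ_m ≤ 1` for odd `m` and `ζ_m ≥ 1` for even `m ≥ 2`,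
even-indexed values decrease, and `ζ_m ≥ 1 - s⁴` for `m ≥ 4`. For `n, n' ≥ 3` the left side is then
at most `ζ_4³` and the right side at least `ζ_2² (1 - s⁴)`, and the two polynomial inequalities
`ζ_4² ≤ ζ_2` and `ζ_4 ≤ ζ_2 (1 - s⁴)` close the gap. The same two inequalities handle `n = 2`,
according to the parity of `n'`.
-/

/-- `ζ_m(q)` as a polynomial in `s = q⁻¹`; the truncated `m - 1` makes the value at `m = 0`
meaningless. -/
def zetaPoly (s : ℝ) (m : ℕ) : ℝ := (1 - (-s) ^ (m - 1)) * (1 - (-s) ^ m)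

theorem zetaPoly_inv (q : ℝ) {m : ℕ} (hm : 1 ≤ m) :
    (1 - (-q) ^ (-(m : ℤ) + 1)) * (1 - (-q) ^ (-(m : ℤ))) = zetaPoly q⁻¹ m := by
  obtain ⟨k, rfl⟩ := Nat.exists_eq_add_of_le' hm
  have : -((k + 1 : ℕ) : ℤ) + 1 = -(k : ℤ) := by push_cast; ring
  rw [this, zetaPoly, zpow_neg, zpow_neg, zpow_natCast, zpow_natCast, ← inv_pow, ← inv_pow,
    inv_neg, Nat.add_sub_cancel]

section
variable {s : ℝ}

@[simp] theorem zetaPoly_one : zetaPoly s 1 = 0 := by simp [zetaPoly]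

theorem zetaPoly_two : zetaPoly s 2 = (1 + s) * (1 - s ^ 2) := by norm_num [zetaPoly]

theorem zetaPoly_four : zetaPoly s 4 = (1 + s ^ 3) * (1 - s ^ 4) := by rw [zetaPoly]; ring

theorem zetaPoly_odd (k : ℕ) :
    zetaPoly s (2 * k + 1) = (1 - s ^ (2 * k)) * (1 + s ^ (2 * k) * s) := by
  simp [zetaPoly, pow_succ, pow_mul]

theorem zetaPoly_even (k : ℕ) :
    zetaPoly s (2 * k + 2) = (1 + s ^ (2 * k + 1)) * (1 - s ^ (2 * k + 1) * s) := by
  simp [zetaPoly, pow_succ, pow_mul]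

theorem zetaPoly_nonneg (hs : |s| ≤ 1) (m : ℕ) : 0 ≤ zetaPoly s m := by
  have h : ∀ j : ℕ, (-s) ^ j ≤ 1 := fun j =>
    (le_abs_self _).trans (by rw [abs_pow, abs_neg]; exact pow_le_one₀ (abs_nonneg s) hs)
  exact mul_nonneg (sub_nonneg.2 (h _)) (sub_nonneg.2 (h _))

theorem zetaPoly_le_one_of_odd (hs0 : 0 ≤ s) (hs1 : s ≤ 1) {m : ℕ} (hm : Odd m) :
    zetaPoly s m ≤ 1 := by
  obtain ⟨k, rfl⟩ := hm
  rw [zetaPoly_odd]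
  have ha : 0 ≤ s ^ (2 * k) := pow_nonneg hs0 _
  nlinarith [mul_le_of_le_one_right ha hs1, mul_nonneg ha (mul_nonneg ha hs0)]

theorem one_sub_pow_four_le_zetaPoly_of_odd (hs0 : 0 ≤ s) (hs1 : s ≤ 1) {m : ℕ} (hm : Odd m)
    (h5 : 5 ≤ m) : 1 - s ^ 4 ≤ zetaPoly s m := by
  obtain ⟨k, rfl⟩ := hm
  rw [zetaPoly_odd]
  have ha : s ^ (2 * k) ≤ s ^ 4 := pow_le_pow_of_le_one hs0 hs1 (by omega)
  have ha1 : s ^ (2 * k) ≤ 1 := pow_le_one₀ hs0 hs1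
  have hb : 0 ≤ s ^ (2 * k) * s := mul_nonneg (pow_nonneg hs0 _) hs0
  nlinarith [mul_nonneg (sub_nonneg.2 ha1) hb]

theorem one_le_zetaPoly_of_even (hs0 : 0 ≤ s) (hs : s ≤ 1 / 2) {m : ℕ} (hm : Even m)
    (h0 : m ≠ 0) : 1 ≤ zetaPoly s m := by
  obtain ⟨k, rfl⟩ : ∃ k, m = 2 * k + 2 := ⟨m / 2 - 1, by rcases hm with ⟨r, rfl⟩; omega⟩
  rw [zetaPoly_even]
  have ha : s ^ (2 * k + 1) ≤ s := pow_le_of_le_one hs0 (by linarith) (by omega)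
  have ha0 : 0 ≤ s ^ (2 * k + 1) := pow_nonneg hs0 _
  nlinarith [mul_le_mul_of_nonneg_left ha ha0, mul_nonneg ha0 hs0]

theorem zetaPoly_le_of_even (hs0 : 0 ≤ s) (hs : s ≤ 1 / 2) {k m : ℕ} (hk : Even k) (hm : Even m)
    (hk0 : k ≠ 0) (hkm : k ≤ m) : zetaPoly s m ≤ zetaPoly s k := by
  obtain ⟨i, rfl⟩ : ∃ i, k = 2 * i + 2 := ⟨k / 2 - 1, by rcases hk with ⟨r, rfl⟩; omega⟩
  obtain ⟨j, rfl⟩ : ∃ j, m = 2 * j + 2 := ⟨m / 2 - 1, by rcases hm with ⟨r, rfl⟩; omega⟩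
  rw [zetaPoly_even, zetaPoly_even]
  set a := s ^ (2 * j + 1)
  set b := s ^ (2 * i + 1)
  have hab : a ≤ b := pow_le_pow_of_le_one hs0 (by linarith) (by omega)
  have hb : b ≤ s := pow_le_of_le_one hs0 (by linarith) (by omega)
  have ha0 : 0 ≤ a := pow_nonneg hs0 _
  -- the difference factors as `(b - a) * (1 - s * (1 + a + b))`
  nlinarith [mul_nonneg (sub_nonneg.2 hab) (by nlinarith : 0 ≤ 1 - s * (1 + a + b))]

theorem zetaPoly_le_zetaPoly_four (hs0 : 0 ≤ s) (hs : s ≤ 1 / 2) {m : ℕ} (hm : 3 ≤ m) :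
    zetaPoly s m ≤ zetaPoly s 4 := by
  rcases Nat.even_or_odd m with he | ho
  · exact zetaPoly_le_of_even hs0 hs (by decide) he (by norm_num) (by grind)
  · exact (zetaPoly_le_one_of_odd hs0 (by linarith) ho).trans
      (one_le_zetaPoly_of_even hs0 hs (by decide) (by norm_num))

theorem one_sub_pow_four_le_zetaPoly (hs0 : 0 ≤ s) (hs : s ≤ 1 / 2) {m : ℕ} (hm : 4 ≤ m) :
    1 - s ^ 4 ≤ zetaPoly s m := by
  rcases Nat.even_or_odd m with he | ho
  · linarith [one_le_zetaPoly_of_even hs0 hs he (by omega), pow_nonneg hs0 4]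
  · exact one_sub_pow_four_le_zetaPoly_of_odd hs0 (by linarith) ho (by grind)

theorem zetaPoly_four_sq_le_zetaPoly_two (hs0 : 0 ≤ s) (hs : s ≤ 1 / 2) :
    zetaPoly s 4 ^ 2 ≤ zetaPoly s 2 := by
  rw [zetaPoly_two, zetaPoly_four]
  have h : 0 ≤ 1 - 2 * s := by linarith
  nlinarith [mul_nonneg hs0 h, mul_nonneg (pow_nonneg hs0 2) h, mul_nonneg (pow_nonneg hs0 3) h,
    pow_nonneg hs0 7, pow_nonneg hs0 8, pow_nonneg hs0 10, pow_nonneg hs0 11, pow_nonneg hs0 14]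

theorem zetaPoly_four_le_zetaPoly_two_mul (hs0 : 0 ≤ s) (hs : s ≤ 1 / 2) :
    zetaPoly s 4 ≤ zetaPoly s 2 * (1 - s ^ 4) := by
  rw [zetaPoly_two, zetaPoly_four]
  have h4 : s ^ 4 ≤ 1 := pow_le_one₀ hs0 (by linarith)
  -- `1 + s ^ 3 ≤ (1 + s) * (1 - s ^ 2)` amounts to `s * (1 - s - 2 * s ^ 2) ≥ 0`
  have h : 1 + s ^ 3 ≤ (1 + s) * (1 - s ^ 2) := by nlinarith [mul_nonneg hs0 (sub_nonneg.2 hs)]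
  exact mul_le_mul_of_nonneg_right h (sub_nonneg.2 h4)

theorem zetaPoly_mul_zetaPoly_four_le (hs0 : 0 ≤ s) (hs : s ≤ 1 / 2) {m : ℕ} (hm : 3 ≤ m) :
    zetaPoly s m * zetaPoly s 4 ≤ zetaPoly s 2 * zetaPoly s (m + 2) := by
  have hZ : ∀ m, 0 ≤ zetaPoly s m := zetaPoly_nonneg (abs_le.2 ⟨by linarith, by linarith⟩)
  rcases Nat.even_or_odd m with he | ho
  · calc zetaPoly s m * zetaPoly s 4 ≤ zetaPoly s 4 ^ 2 := by
          rw [sq]; exact mul_le_mul_of_nonneg_right (zetaPoly_le_zetaPoly_four hs0 hs hm) (hZ 4)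
      _ ≤ zetaPoly s 2 := zetaPoly_four_sq_le_zetaPoly_two hs0 hs
      _ ≤ zetaPoly s 2 * zetaPoly s (m + 2) :=
          le_mul_of_one_le_right (hZ 2) (one_le_zetaPoly_of_even hs0 hs (by grind) (by omega))
  · calc zetaPoly s m * zetaPoly s 4 ≤ zetaPoly s 4 :=
          mul_le_of_le_one_left (hZ 4) (zetaPoly_le_one_of_odd hs0 (by linarith) ho)
      _ ≤ zetaPoly s 2 * (1 - s ^ 4) := zetaPoly_four_le_zetaPoly_two_mul hs0 hs
      _ ≤ zetaPoly s 2 * zetaPoly s (m + 2) :=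
          mul_le_mul_of_nonneg_left (one_sub_pow_four_le_zetaPoly hs0 hs (by omega)) (hZ 2)

theorem zetaPoly_mul_mul_zetaPoly_four_le (hs0 : 0 ≤ s) (hs : s ≤ 1 / 2) {n n' : ℕ} (hn : 1 ≤ n)
    (hn' : 1 ≤ n') :
    zetaPoly s n * zetaPoly s n' * zetaPoly s 4 ≤ zetaPoly s 2 ^ 2 * zetaPoly s (n + n') := by
  wlog hle : n ≤ n' generalizing n n'
  · simpa only [mul_comm (zetaPoly s n), add_comm n] using this hn' hn (by omega)
  have hZ : ∀ m, 0 ≤ zetaPoly s m := zetaPoly_nonneg (abs_le.2 ⟨by linarith, by linarith⟩)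
  obtain rfl | rfl | hn3 : n = 1 ∨ n = 2 ∨ 3 ≤ n := by omega
  · simpa using mul_nonneg (sq_nonneg _) (hZ _)
  · obtain rfl | hn'3 : n' = 2 ∨ 3 ≤ n' := by omega
    · exact le_of_eq (by ring)
    · calc zetaPoly s 2 * zetaPoly s n' * zetaPoly s 4
          = zetaPoly s 2 * (zetaPoly s n' * zetaPoly s 4) := mul_assoc _ _ _
        _ ≤ zetaPoly s 2 * (zetaPoly s 2 * zetaPoly s (n' + 2)) :=
          mul_le_mul_of_nonneg_left (zetaPoly_mul_zetaPoly_four_le hs0 hs hn'3) (hZ 2)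
        _ = zetaPoly s 2 ^ 2 * zetaPoly s (2 + n') := by ring_nf
  · have hB : ∀ {m}, 3 ≤ m → zetaPoly s m ≤ zetaPoly s 4 := zetaPoly_le_zetaPoly_four hs0 hs
    calc zetaPoly s n * zetaPoly s n' * zetaPoly s 4 ≤ zetaPoly s 4 ^ 2 * zetaPoly s 4 := by
          rw [sq]
          exact mul_le_mul_of_nonneg_right
            (mul_le_mul (hB hn3) (hB (by omega)) (hZ _) (hZ 4)) (hZ 4)
      _ ≤ zetaPoly s 2 * (zetaPoly s 2 * (1 - s ^ 4)) :=
          mul_le_mul (zetaPoly_four_sq_le_zetaPoly_two hs0 hs)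
            (zetaPoly_four_le_zetaPoly_two_mul hs0 hs) (hZ 4) (hZ 2)
      _ ≤ zetaPoly s 2 ^ 2 * zetaPoly s (n + n') := by
          rw [← mul_assoc, ← sq]
          exact mul_le_mul_of_nonneg_left (one_sub_pow_four_le_zetaPoly hs0 hs (by omega))
            (sq_nonneg _)

end

/-- With ζ_n(q) = (1 - (-q)^{-n+1})(1 - (-q)^{-n}), q ≥ 2 and n, n' ≥ 1,
ζ_n ζ_{n'} ζ_4 ≤ ζ_2² ζ_{n+n'}. -/
theorem stmt_7 (q : ℝ) (hq : 2 ≤ q) (ζ : ℕ → ℝ)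
    (hζ : ∀ n : ℕ, ζ n = (1 - (-q) ^ (-(n : ℤ) + 1)) * (1 - (-q) ^ (-(n : ℤ))))
    (n n' : ℕ) (hn : 1 ≤ n) (hn' : 1 ≤ n') :
    ζ n * ζ n' * ζ 4 ≤ ζ 2 ^ 2 * ζ (n + n') := by
  have hζ' : ∀ m, 1 ≤ m → ζ m = zetaPoly q⁻¹ m := fun m hm => (hζ m).trans (zetaPoly_inv q hm)
  rw [hζ' n hn, hζ' n' hn', hζ' 4 (by norm_num), hζ' 2 (by norm_num), hζ' (n + n') (by omega)]
  have hq0 : 0 < q := by linarith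
  refine zetaPoly_mul_mul_zetaPoly_four_le (inv_nonneg.2 hq0.le) ?_ hn hn'
  rw [one_div]
  exact inv_anti₀ (by norm_num) hq
end

section
/- In a non-degenerate symplectic space U of dimension n over F_q, the number of totally isotropic k-subspaces is ∏_{i=0}^{k-1} (q^{n-2i}-1)/(q^{k-i}-1). -/
/-!
Count the isotropic frames, i.e. linearly independent `k`-tuples `(v₀, …, v_{k-1})` with
`B vᵢ vⱼ = 0`, in two ways. Extending an isotropic frame `s` of length `i` by one vector means
choosing `v ∈ s^⊥ \ span s`; since `span s ⊆ s^⊥` and `dim s^⊥ = n - i` by non-degeneracy,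
there are `q^(n-i) - q^i` choices. On the other hand, each isotropic frame spans a totally
isotropic `k`-subspace `W`, and every basis of `W` is an isotropic frame, giving
`∏ (q^k - q^i)` frames per subspace. Dividing, and cancelling `q^i` from the `i`-th factors,
gives the formula.
-/

open Module Submodule

namespace LinearMap.BilinForm

variable {K V : Type*} [Field K] [AddCommGroup V] [Module K V] {B : LinearMap.BilinForm K V}

def IsIsotropicFrame (B : LinearMap.BilinForm K V) {j : ℕ} (s : Fin j → V) : Prop :=
  LinearIndependent K s ∧ ∀ a b, B (s a) (s b) = 0

theorem isotropic_span {ι : Type*} {s : ι → V} (h : ∀ a b, B (s a) (s b) = 0) :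
    ∀ x ∈ span K (Set.range s), ∀ y ∈ span K (Set.range s), B x y = 0 := by
  intro x hx y hy
  induction hx, hy using span_induction₂ with
  | mem_mem x y hx hy => obtain ⟨a, rfl⟩ := hx; obtain ⟨b, rfl⟩ := hy; exact h a b
  | zero_left | zero_right => simp
  | add_left | add_right | smul_left | smul_right => simp_all

theorem mem_orthogonal_span_range_iff {ι : Type*} {s : ι → V} {v : V} :
    v ∈ B.orthogonal (span K (Set.range s)) ↔ ∀ i, B (s i) v = 0 := by
  simp only [mem_orthogonal_iff]
  refine ⟨fun h i => h _ (subset_span (Set.mem_range_self i)), fun h w hw => ?_⟩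
  exact LinearMap.eqOn_span' (f := B.flip v) (g := 0) (by rintro _ ⟨i, rfl⟩; exact h i) hw

theorem isIsotropicFrame_cons_iff (halt : B.IsAlt) {j : ℕ} {v : V} {s : Fin j → V} :
    B.IsIsotropicFrame (Fin.cons v s : Fin (j + 1) → V) ↔
      B.IsIsotropicFrame s ∧
        v ∈ (B.orthogonal (span K (Set.range s)) : Set V) \ span K (Set.range s) := by
  simp only [IsIsotropicFrame, linearIndependent_finCons, Fin.forall_fin_succ, Fin.cons_zero,
    Fin.cons_succ, Set.mem_sdiff, SetLike.mem_coe, mem_orthogonal_span_range_iff, halt v]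
  have hrefl : ∀ i, B v (s i) = 0 ↔ B (s i) v = 0 := fun i => ⟨halt.isRefl _ _, halt.isRefl _ _⟩
  simp only [hrefl, forall_and]
  tauto

def isotropicFrameSuccEquiv (halt : B.IsAlt) (j : ℕ) :
    {s : Fin (j + 1) → V // B.IsIsotropicFrame s} ≃
      Σ s : {s : Fin j → V // B.IsIsotropicFrame s},
        ((B.orthogonal (span K (Set.range s.1)) : Set V) \ span K (Set.range s.1) : Set V) where
  toFun s :=
    have h := (isIsotropicFrame_cons_iff halt).mp ((Fin.cons_self_tail s.1).symm ▸ s.2)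
    ⟨⟨Fin.tail s.1, h.1⟩, ⟨s.1 0, h.2⟩⟩
  invFun p := ⟨Fin.cons p.2.1 p.1.1, (isIsotropicFrame_cons_iff halt).mpr ⟨p.1.2, p.2.2⟩⟩
  left_inv s := Subtype.ext (Fin.cons_self_tail s.1)
  right_inv _ := rfl

section Finite

variable [Fintype K] [Finite V]

local notation "q" => Fintype.card K
local notation "n" => Module.finrank K V

theorem card_orthogonal_sdiff_span (hnd : B.Nondegenerate) {j : ℕ} {s : Fin j → V}
    (hs : B.IsIsotropicFrame s) :
    Nat.card ((B.orthogonal (span K (Set.range s)) : Set V) \ span K (Set.range s) : Set V) =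
      q ^ (n - j) - q ^ j := by
  have hW : finrank K (span K (Set.range s)) = j := by
    rw [finrank_span_eq_card hs.1, Fintype.card_fin]
  have hWO : (span K (Set.range s) : Set V) ⊆ B.orthogonal (span K (Set.range s)) :=
    fun y hy => mem_orthogonal_iff.mpr fun x hx => isotropic_span hs.2 x hx y hy
  rw [Nat.card_coe_set_eq, Set.ncard_sdiff hWO, ← Nat.card_coe_set_eq, ← Nat.card_coe_set_eq,
    SetLike.coe_sort_coe, SetLike.coe_sort_coe,
    natCard_eq_pow_finrank (K := K) (V := B.orthogonal _),
    natCard_eq_pow_finrank (K := K) (V := span K _), finrank_orthogonal hnd, hW,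
    Nat.card_eq_fintype_card]

attribute [local instance] Fintype.ofFinite in
theorem card_isotropicFrame (hnd : B.Nondegenerate) (halt : B.IsAlt) (j : ℕ) :
    Nat.card {s : Fin j → V // B.IsIsotropicFrame s} =
      ∏ i ∈ Finset.range j, (q ^ (n - i) - q ^ i) := by
  induction j with
  | zero =>
    have : Unique {s : Fin 0 → V // B.IsIsotropicFrame s} :=
      ⟨⟨⟨Fin.elim0, linearIndependent_empty_type, fun a => a.elim0⟩⟩,
        fun _ => Subsingleton.elim _ _⟩
    rw [Nat.card_unique, Finset.prod_range_zero]
  | succ j ih =>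
    rw [Nat.card_congr (isotropicFrameSuccEquiv halt j), Nat.card_sigma,
      Finset.sum_congr rfl fun s _ => card_orthogonal_sdiff_span hnd s.2, Finset.sum_const,
      Finset.card_univ, ← Nat.card_eq_fintype_card, ih, Finset.prod_range_succ, smul_eq_mul]

def spanIsotropicFrame {k : ℕ} (s : {s : Fin k → V // B.IsIsotropicFrame s}) :
    {W : Submodule K V // finrank K W = k ∧ ∀ x ∈ W, ∀ y ∈ W, B x y = 0} :=
  ⟨span K (Set.range s.1), by rw [finrank_span_eq_card s.2.1, Fintype.card_fin],
    isotropic_span s.2.2⟩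

def spanIsotropicFrameFiberEquiv {k : ℕ}
    (W : {W : Submodule K V // finrank K W = k ∧ ∀ x ∈ W, ∀ y ∈ W, B x y = 0}) :
    {s // spanIsotropicFrame s = W} ≃ {t : Fin k → W.1 // LinearIndependent K t} where
  toFun s := ⟨fun i => ⟨s.1.1 i, (congrArg Subtype.val s.2).le (subset_span ⟨i, rfl⟩)⟩,
    LinearIndependent.of_comp W.1.subtype s.1.2.1⟩
  invFun t := ⟨⟨W.1.subtype ∘ t.1, t.2.map' _ W.1.ker_subtype,
      fun a b => W.2.2 _ (t.1 a).2 _ (t.1 b).2⟩, by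
    refine Subtype.ext ?_
    change span K (Set.range (W.1.subtype ∘ t.1)) = W.1
    rw [Set.range_comp, ← map_span, t.2.span_eq_top_of_card_eq_finrank' (by simp [W.2.1]),
      Submodule.map_top, range_subtype]⟩
  left_inv _ := rfl
  right_inv _ := rfl

attribute [local instance] Fintype.ofFinite in
theorem card_isotropicFrame_eq_mul (k : ℕ) :
    Nat.card {s : Fin k → V // B.IsIsotropicFrame s} =
      Nat.card {W : Submodule K V // finrank K W = k ∧ ∀ x ∈ W, ∀ y ∈ W, B x y = 0} *
        ∏ i ∈ Finset.range k, (q ^ k - q ^ i) := by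
  have : Finite (Submodule K V) := Finite.of_injective _ SetLike.coe_injective
  rw [← Nat.card_congr (Equiv.sigmaFiberEquiv spanIsotropicFrame), Nat.card_sigma,
    Finset.sum_congr rfl fun W _ => ?_, Finset.sum_const, Finset.card_univ,
    ← Nat.card_eq_fintype_card, smul_eq_mul]
  rw [Nat.card_congr (spanIsotropicFrameFiberEquiv W), card_linearIndependent W.2.1.ge, W.2.1,
    Fin.prod_univ_eq_prod_range (fun i => q ^ k - q ^ i)]

theorem card_totallyIsotropic_mul_prod (hnd : B.Nondegenerate) (halt : B.IsAlt) (k : ℕ) :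
    Nat.card {W : Submodule K V // finrank K W = k ∧ ∀ x ∈ W, ∀ y ∈ W, B x y = 0} *
        ∏ i ∈ Finset.range k, (q ^ k - q ^ i) =
      ∏ i ∈ Finset.range k, (q ^ (n - i) - q ^ i) := by
  rw [← card_isotropicFrame_eq_mul, card_isotropicFrame hnd halt]

end Finite

end LinearMap.BilinForm

theorem Nat.cast_pow_sub_pow {R : Type*} [CommRing R] {q a b : ℕ} (hq : 1 ≤ q) (hab : a ≤ b) :
    ((q ^ b - q ^ a : ℕ) : R) = (q : R) ^ a * ((q : R) ^ (b - a) - 1) := by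
  rw [Nat.cast_sub (Nat.pow_le_pow_right hq hab), mul_sub, ← pow_add, Nat.add_sub_cancel' hab]
  push_cast
  ring

theorem stmt_12_general (q n k : ℕ)
    (F : Type) [Field F] [Fintype F] (hF : Fintype.card F = q)
    (B : LinearMap.BilinForm F (Fin n → F)) (halt : B.IsAlt) (hnd : B.Nondegenerate)
    (hk : 2 * k ≤ n) :
    (Nat.card {W : Submodule F (Fin n → F) //
        Module.finrank F W = k ∧ ∀ x ∈ W, ∀ y ∈ W, B x y = 0} : ℝ) =
      ∏ i ∈ Finset.range k,
        ((q : ℝ) ^ (n - 2 * i) - 1) / ((q : ℝ) ^ (k - i) - 1) := by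
  subst hF
  have hq : 1 < Fintype.card F := Fintype.one_lt_card
  have hcount := congrArg (Nat.cast : ℕ → ℝ) (B.card_totallyIsotropic_mul_prod hnd halt k)
  rw [Module.finrank_fin_fun, Nat.cast_mul, Nat.cast_prod, Nat.cast_prod] at hcount
  have hden : ∀ i ∈ Finset.range k, ((Fintype.card F ^ k - Fintype.card F ^ i : ℕ) : ℝ) ≠ 0 :=
    fun i hi => Nat.cast_ne_zero.mpr <|
      Nat.sub_ne_zero_of_lt (Nat.pow_lt_pow_right hq (Finset.mem_range.mp hi))
  rw [eq_div_of_mul_eq (Finset.prod_ne_zero_iff.mpr hden) hcount, ← Finset.prod_div_distrib]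
  refine Finset.prod_congr rfl fun i hi => ?_
  have hik := Finset.mem_range.mp hi
  rw [Nat.cast_pow_sub_pow hq.le (by omega), Nat.cast_pow_sub_pow hq.le hik.le,
    mul_div_mul_left _ _ (pow_ne_zero _ (by positivity)), show n - i - i = n - 2 * i by omega]

/-- In a non-degenerate symplectic space of dimension n over F_q, the number of
totally isotropic k-subspaces is ∏_{i=0}^{k-1} (q^{n-2i}-1)/(q^{k-i}-1). -/
theorem stmt_12 (q n k : ℕ) (hq : IsPrimePow q)
    (F : Type) [Field F] [Fintype F] (hF : Fintype.card F = q)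
    (B : LinearMap.BilinForm F (Fin n → F)) (halt : B.IsAlt) (hnd : B.Nondegenerate)
    (hk : 2 * k ≤ n) :
    (Nat.card {W : Submodule F (Fin n → F) //
        Module.finrank F W = k ∧ ∀ x ∈ W, ∀ y ∈ W, B x y = 0} : ℝ) =
      ∏ i ∈ Finset.range k,
        ((q : ℝ) ^ (n - 2 * i) - 1) / ((q : ℝ) ^ (k - i) - 1) :=
  stmt_12_general q n k F hF B halt hnd hk
end

section
/- In a non-degenerate symplectic space U of even dimension n ≥ 4 over F_2, the number of 3-subspaces that are not totally isotropic equals 2^{3(n-2)}/3 · (1-2^{-n})(1-2^{-n+2}). -/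
/-! Count the linearly independent triples of `U` in two ways. Grouped by their span, each
3-space carries `|GL₃(𝔽₂)| = 168` ordered bases, and a triple spans a totally isotropic space
exactly when it is pairwise orthogonal. The pairwise orthogonal independent frames are counted
one vector at a time: the `(i+1)`-st vector ranges over the orthogonal of the span of the first
`i`, of dimension `n - i`, minus that span, of dimension `i`. Hence the number `N` of
non-isotropic 3-spaces satisfies `168 N = ∏ᵢ (2ⁿ - 2ⁱ) - ∏ᵢ (2ⁿ⁻ⁱ - 2ⁱ)`, `i < 3`. -/

open Module Submodule

theorem card_subtype_and_add_card_subtype_and_not {α : Type*} [Finite α] (p q : α → Prop) :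
    Nat.card {x // p x ∧ q x} + Nat.card {x // p x ∧ ¬ q x} = Nat.card {x // p x} := by
  classical
  have := Fintype.ofFinite α
  simp only [Nat.card_eq_fintype_card, Fintype.card_subtype, ← Finset.filter_filter]
  exact Finset.card_filter_add_card_filter_not _

variable {K V : Type*} [Field K] [AddCommGroup V] [Module K V]

local notation "q" => Fintype.card K

section Frames

variable [Fintype K] [Finite V]

theorem Submodule.natCard_sdiff_of_le {W W' : Submodule K V} (h : W ≤ W') :
    Nat.card ↥((W' : Set V) \ W) = q ^ finrank K W' - q ^ finrank K W := by
  have hcard (U : Submodule K V) : Nat.card U = q ^ finrank K U := by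
    rw [Module.natCard_eq_pow_finrank (K := K), Nat.card_eq_fintype_card]
  rw [Nat.card_coe_set_eq, Set.ncard_sdiff h, ← Nat.card_coe_set_eq, ← Nat.card_coe_set_eq,
    SetLike.coe_sort_coe, SetLike.coe_sort_coe, hcard, hcard]

theorem card_linearIndependent_span_eq {k : ℕ} (W : Submodule K V) (hW : finrank K W = k) :
    Nat.card {s : Fin k → V // LinearIndependent K s ∧ span K (Set.range s) = W} =
      ∏ i : Fin k, (q ^ k - q ^ (i : ℕ)) := by
  let e : {t : Fin k → W // LinearIndependent K t} ≃
      {s : Fin k → V // LinearIndependent K s ∧ span K (Set.range s) = W} :=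
    { toFun := fun t => ⟨W.subtype ∘ t, t.2.map' _ W.ker_subtype, by
        rw [Set.range_comp, span_image, t.2.span_eq_top_of_card_eq_finrank'
          (by rw [Fintype.card_fin, hW]), map_subtype_top]⟩
      invFun := fun s => ⟨fun i => ⟨s.1 i, s.2.2.le (subset_span (Set.mem_range_self i))⟩,
        s.2.1.of_comp W.subtype⟩
      left_inv := fun _ => rfl
      right_inv := fun _ => rfl }
  rw [← Nat.card_congr e, card_linearIndependent (hW ▸ le_rfl), hW]

theorem card_linearIndependent_span_mem (P : Submodule K V → Prop) (k : ℕ) :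
    Nat.card {s : Fin k → V // LinearIndependent K s ∧ P (span K (Set.range s))} =
      Nat.card {W : Submodule K V // finrank K W = k ∧ P W} *
        ∏ i : Fin k, (q ^ k - q ^ (i : ℕ)) := by
  let e : {s : Fin k → V // LinearIndependent K s ∧ P (span K (Set.range s))} ≃
      Σ W : {W : Submodule K V // finrank K W = k ∧ P W},
        {s : Fin k → V // LinearIndependent K s ∧ span K (Set.range s) = W} :=
    { toFun := fun s => ⟨⟨_, by rw [finrank_span_eq_card s.2.1, Fintype.card_fin], s.2.2⟩,
        ⟨s.1, s.2.1, rfl⟩⟩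
      invFun := fun p => ⟨p.2.1, p.2.2.1, by rw [p.2.2.2]; exact p.1.2.2⟩
      left_inv := fun _ => rfl
      right_inv := fun p => Sigma.subtype_ext (Subtype.ext p.2.2.2) rfl }
  have := Fintype.ofFinite {W : Submodule K V // finrank K W = k ∧ P W}
  rw [Nat.card_congr e, Nat.card_sigma,
    Finset.sum_congr rfl fun W _ => card_linearIndependent_span_eq W.1 W.2.1,
    Finset.sum_const, Finset.card_univ, smul_eq_mul, Nat.card_eq_fintype_card]

end Frames

section Isotropic

variable (B : LinearMap.BilinForm K V)

theorem mem_orthogonal_span_range_iff {ι : Type*} (v : ι → V) (x : V) :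
    x ∈ B.orthogonal (span K (Set.range v)) ↔ ∀ i, B (v i) x = 0 := by
  change span K (Set.range v) ≤ LinearMap.ker (B.flip x) ↔ _
  rw [span_le, Set.range_subset_iff]
  rfl

theorem forall_mem_span_range_apply_eq_zero_iff {ι : Type*} (v : ι → V) :
    (∀ x ∈ span K (Set.range v), ∀ y ∈ span K (Set.range v), B x y = 0) ↔
      ∀ i j, B (v i) (v j) = 0 := by
  refine ⟨fun h i j => h _ (subset_span ⟨i, rfl⟩) _ (subset_span ⟨j, rfl⟩), fun h x hx y hy => ?_⟩
  have : span K (Set.range v) ≤ B.orthogonal (span K (Set.range v)) :=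
    span_le.2 <| Set.range_subset_iff.2 fun j => (mem_orthogonal_span_range_iff B v _).2 (h · j)
  exact this hy x hx

theorem linearIndependent_cons_isotropic_iff (halt : B.IsAlt) {k : ℕ} (x : V) (v : Fin k → V) :
    (LinearIndependent K (Fin.cons x v : Fin (k + 1) → V) ∧
        ∀ i j, B ((Fin.cons x v : Fin (k + 1) → V) i) ((Fin.cons x v : Fin (k + 1) → V) j) = 0) ↔
      (LinearIndependent K v ∧ ∀ i j, B (v i) (v j) = 0) ∧
        x ∈ (B.orthogonal (span K (Set.range v)) : Set V) \ span K (Set.range v) := by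
  simp only [linearIndependent_finCons, Fin.forall_fin_succ, Fin.cons_zero, Fin.cons_succ,
    halt.self_eq_zero, Set.mem_sdiff, SetLike.mem_coe, mem_orthogonal_span_range_iff]
  have hrefl (i : Fin k) : B x (v i) = 0 ↔ B (v i) x = 0 := ⟨halt.isRefl _ _, halt.isRefl _ _⟩
  simp only [hrefl, forall_and, true_and]
  tauto

variable [Fintype K] [Finite V]

theorem card_linearIndependent_isotropic (halt : B.IsAlt) (hnd : B.Nondegenerate) (k : ℕ) :
    Nat.card {s : Fin k → V // LinearIndependent K s ∧ ∀ i j, B (s i) (s j) = 0} =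
      ∏ i : Fin k, (q ^ (finrank K V - i) - q ^ (i : ℕ)) := by
  induction k with
  | zero =>
    simp
  | succ k ih =>
    let e : {s : Fin (k + 1) → V // LinearIndependent K s ∧ ∀ i j, B (s i) (s j) = 0} ≃
        Σ s : {s : Fin k → V // LinearIndependent K s ∧ ∀ i j, B (s i) (s j) = 0},
          ↥((B.orthogonal (span K (Set.range s.1)) : Set V) \ span K (Set.range s.1)) :=
      { toFun := fun s =>
          have h := (linearIndependent_cons_isotropic_iff B halt (s.1 0) (Fin.tail s.1)).1
            (by simpa only [Fin.cons_self_tail] using s.2)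
          ⟨⟨Fin.tail s.1, h.1⟩, ⟨s.1 0, h.2⟩⟩
        invFun := fun p => ⟨Fin.cons p.2.1 p.1.1,
          (linearIndependent_cons_isotropic_iff B halt _ _).2 ⟨p.1.2, p.2.2⟩⟩
        left_inv := fun s => Subtype.ext (Fin.cons_self_tail s.1)
        right_inv := fun p =>
          Sigma.subtype_ext (Subtype.ext (Fin.tail_cons (α := fun _ => V) p.2.1 p.1.1)) rfl }
    have hiso (s : Fin k → V) (hs : LinearIndependent K s ∧ ∀ i j, B (s i) (s j) = 0) :
        span K (Set.range s) ≤ B.orthogonal (span K (Set.range s)) :=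
      fun x hx y hy => (forall_mem_span_range_apply_eq_zero_iff B s).2 hs.2 y hy x hx
    have hfiber (s : {s : Fin k → V // LinearIndependent K s ∧ ∀ i j, B (s i) (s j) = 0}) :
        Nat.card ↥((B.orthogonal (span K (Set.range s.1)) : Set V) \ span K (Set.range s.1)) =
          q ^ (finrank K V - k) - q ^ k := by
      rw [natCard_sdiff_of_le (hiso s.1 s.2), LinearMap.BilinForm.finrank_orthogonal hnd,
        finrank_span_eq_card s.2.1, Fintype.card_fin]
    have := Fintype.ofFinite {s : Fin k → V // LinearIndependent K s ∧ ∀ i j, B (s i) (s j) = 0}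
    rw [Nat.card_congr e, Nat.card_sigma, Finset.sum_congr rfl fun s _ => hfiber s,
      Finset.sum_const, Finset.card_univ, smul_eq_mul, ← Nat.card_eq_fintype_card, ih,
      Fin.prod_univ_castSucc]
    simp

theorem card_isotropic_add_card_finrank_eq_not_isotropic_mul (halt : B.IsAlt)
    (hnd : B.Nondegenerate) {k : ℕ} (hk : k ≤ finrank K V) :
    ∏ i : Fin k, (q ^ (finrank K V - i) - q ^ (i : ℕ)) +
        Nat.card {W : Submodule K V // finrank K W = k ∧ ¬ ∀ x ∈ W, ∀ y ∈ W, B x y = 0} *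
          ∏ i : Fin k, (q ^ k - q ^ (i : ℕ)) =
      ∏ i : Fin k, (q ^ finrank K V - q ^ (i : ℕ)) := by
  rw [← card_linearIndependent_span_mem, ← card_linearIndependent hk,
    ← card_linearIndependent_isotropic B halt hnd]
  simp only [forall_mem_span_range_apply_eq_zero_iff]
  exact card_subtype_and_add_card_subtype_and_not _ _

end Isotropic

theorem cast_eq_of_add_mul_168_eq {N t : ℕ} (ht : 4 ≤ t)
    (h : (4 * t - 1) * (2 * t - 2) * (t - 4) + N * 168 = (4 * t - 1) * (4 * t - 2) * (4 * t - 4)) :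
    (N : ℝ) = t ^ 3 / 3 * ((1 - ((4 : ℝ) * t)⁻¹) * (1 - (t : ℝ)⁻¹)) := by
  have hR := congrArg (Nat.cast : ℕ → ℝ) h
  push_cast [Nat.cast_sub (by omega : 1 ≤ 4 * t), Nat.cast_sub (by omega : 2 ≤ 4 * t),
    Nat.cast_sub (by omega : 4 ≤ 4 * t), Nat.cast_sub (by omega : 2 ≤ 2 * t),
    Nat.cast_sub ht] at hR
  have ht0 : (t : ℝ) ≠ 0 := by positivity
  field_simp
  linarith

theorem stmt_14_general (n : ℕ) (hn : 4 ≤ n)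
    (B : LinearMap.BilinForm (ZMod 2) (Fin n → ZMod 2))
    (halt : B.IsAlt) (hnd : B.Nondegenerate) :
    (Nat.card {W : Submodule (ZMod 2) (Fin n → ZMod 2) //
        Module.finrank (ZMod 2) W = 3 ∧ ¬(∀ x ∈ W, ∀ y ∈ W, B x y = 0)} : ℝ) =
      2 ^ (3 * (n - 2)) / 3 *
        ((1 - (2 : ℝ) ^ (-(n : ℤ))) * (1 - (2 : ℝ) ^ (-(n : ℤ) + 2))) := by
  have hcount := card_isotropic_add_card_finrank_eq_not_isotropic_mul B halt hnd (k := 3)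
    (by rw [finrank_fin_fun]; omega)
  obtain ⟨m, rfl⟩ := Nat.exists_eq_add_of_le' hn
  generalize Nat.card _ = N at hcount ⊢
  simp only [finrank_fin_fun, ZMod.card, Fin.prod_univ_three] at hcount
  have ht : 4 ≤ 2 ^ (m + 2) := Nat.pow_le_pow_right two_pos (Nat.le_add_left 2 m)
  rw [cast_eq_of_add_mul_168_eq ht]
  · rw [show 3 * (m + 4 - 2) = (m + 2) * 3 by omega, pow_mul,
      show -((m + 4 : ℕ) : ℤ) + 2 = -((m + 2 : ℕ) : ℤ) by push_cast; ring, zpow_neg, zpow_neg,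
      zpow_natCast, zpow_natCast]
    push_cast
    ring
  · have h4 : 2 ^ (m + 4) = 4 * 2 ^ (m + 2) := by ring
    have h3 : 2 ^ (m + 4 - 1) = 2 * 2 ^ (m + 2) := by
      rw [show m + 4 - 1 = m + 2 + 1 by omega]; ring
    simp only [Fin.val_zero, Fin.val_one, Fin.val_two, Nat.sub_zero, h4, h3,
      show m + 4 - 2 = m + 2 by omega] at hcount
    simpa using hcount

/-- In a non-degenerate symplectic space of even dimension n ≥ 4 over F_2, the number
of 3-subspaces that are not totally isotropic equals
2^{3(n-2)}/3 · (1-2^{-n})(1-2^{-n+2}). -/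
theorem stmt_14 (n : ℕ) (hn : 4 ≤ n) (hne : Even n)
    (B : LinearMap.BilinForm (ZMod 2) (Fin n → ZMod 2))
    (halt : B.IsAlt) (hnd : B.Nondegenerate) :
    (Nat.card {W : Submodule (ZMod 2) (Fin n → ZMod 2) //
        Module.finrank (ZMod 2) W = 3 ∧ ¬(∀ x ∈ W, ∀ y ∈ W, B x y = 0)} : ℝ) =
      2 ^ (3 * (n - 2)) / 3 *
        ((1 - (2 : ℝ) ^ (-(n : ℤ))) * (1 - (2 : ℝ) ^ (-(n : ℤ) + 2))) :=
  stmt_14_general n hn B halt hnd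
end
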